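/- arXiv:1611.00936 — 10 statements merged into one kernel-verified Lean document; each statement's English description precedes it below -/
import Mathlib

section
/- Let X₁ = Q(G, H₁, α) and X₂ = Q(G, H₂, α) be coset quandles with H₁ ≤ H₂. Then the map xH₁ ↦ xH₂ is a surjective quandle homomorphism ψ : X₁ → X₂ such that whenever ψ(xH₁) = ψ(yH₁), the left translations by xH₁ and yH₁ in X₁ coincide (i.e., X₁ is a covering of X₂). -/
/-! If `xH₂ = yH₂` then `x⁻¹y ∈ H₂` is fixed by `α`, so it can be pulled out of `α` in
`y · α(y⁻¹z) = x · (x⁻¹y) · α((x⁻¹y)⁻¹ · x⁻¹z)`, leaving `x · α(x⁻¹z)`: the left translations by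
`xH₁` and `yH₁` agree. -/

theorem Subgroup.quotientMapOfLE_surjective {G : Type*} [Group G] {s t : Subgroup G}
    (h : s ≤ t) : Function.Surjective (quotientMapOfLE h) := fun b =>
  QuotientGroup.induction_on b fun x => ⟨x, rfl⟩

theorem mul_map_inv_mul_eq_of_map_inv_mul_eq {G F : Type*} [Group G] [FunLike F G G]
    [MonoidHomClass F G G] (α : F) {x y : G}
    (hxy : α (x⁻¹ * y) = x⁻¹ * y) (z : G) : x * α (x⁻¹ * z) = y * α (y⁻¹ * z) :=
  calc x * α (x⁻¹ * z) = y * ((α (x⁻¹ * y))⁻¹ * α (x⁻¹ * z)) := by rw [hxy]; group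
    _ = y * α ((x⁻¹ * y)⁻¹ * (x⁻¹ * z)) := by rw [map_mul α (x⁻¹ * y)⁻¹, map_inv]
    _ = y * α (y⁻¹ * z) := by group

/-- Coset quandles: if `H₁ ≤ H₂ ≤ Fix(α)` then the natural map
`G⧸H₁ → G⧸H₂` is a surjective quandle homomorphism which is a covering. -/
theorem coset_quandle_covering {G : Type*} [Group G] (α : G ≃* G)
    (H₁ H₂ : Subgroup G) (hle : H₁ ≤ H₂)
    (hfix : ∀ h ∈ H₂, α h = h)
    (op₁ : G ⧸ H₁ → G ⧸ H₁ → G ⧸ H₁)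
    (hop₁ : ∀ x y : G, op₁ (↑x) (↑y) = ((x * α (x⁻¹ * y) : G) : G ⧸ H₁))
    (op₂ : G ⧸ H₂ → G ⧸ H₂ → G ⧸ H₂)
    (hop₂ : ∀ x y : G, op₂ (↑x) (↑y) = ((x * α (x⁻¹ * y) : G) : G ⧸ H₂)) :
    ∃ ψ : G ⧸ H₁ → G ⧸ H₂,
      (∀ x : G, ψ (↑x) = (↑x : G ⧸ H₂)) ∧
      Function.Surjective ψ ∧
      (∀ a b : G ⧸ H₁, ψ (op₁ a b) = op₂ (ψ a) (ψ b)) ∧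
      (∀ a b : G ⧸ H₁, ψ a = ψ b → ∀ c, op₁ a c = op₁ b c) := by
  refine ⟨Subgroup.quotientMapOfLE hle, Subgroup.quotientMapOfLE_apply_mk hle,
    Subgroup.quotientMapOfLE_surjective hle, ?_, ?_⟩
  · intro a b
    induction a using QuotientGroup.induction_on with | H x => ?_
    induction b using QuotientGroup.induction_on with | H y => ?_
    simp only [hop₁, hop₂, Subgroup.quotientMapOfLE_apply_mk]
  · intro a b hab c
    induction a using QuotientGroup.induction_on with | H x => ?_
    induction b using QuotientGroup.induction_on with | H y => ?_
    induction c using QuotientGroup.induction_on with | H z => ?_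
    have hxy : x⁻¹ * y ∈ H₂ := QuotientGroup.eq.mp hab
    rw [hop₁, hop₁, mul_map_inv_mul_eq_of_map_inv_mul_eq α (hfix _ hxy)]
end

section
/- Let X be a latin quandle with distinguished element u, and let β : X × X → G be a u-normalized constant quandle cocycle with values in a group G. Then β(u/(u/x), x) = β(u/x, x) for every x ∈ X. Moreover, (u/(u/x)) ▷ x = u if and only if x = u. -/
/-! Write `a ▷ b` for `op a b` and `a / b` for `rd a b`. Put `a = u/(u/x)` and `b = u/x`, so that
`a ▷ b = b ▷ x = u`; the cocycle identity for `(a, b, x)` then reads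
`β(u, a ▷ x) β(a, x) = β(a, u) β(b, x)`. Normalization kills `β(a, u)`, and the cocycle identity
for `(u, w/u, u)` shows `β(u, w) = 1` for all `w`, which leaves `β(a, x) = β(b, x)`.
For the second claim, `a ▷ x = u = b ▷ x` forces `a = b` by right cancellation, so `b ▷ b = u`,
hence `b = u` and `u ▷ x = u = u ▷ u`, i.e. `x = u`. -/

section RightDivision

variable {X : Type*} {op rd : X → X → X}

theorem op_left_injective (hrd₂ : ∀ x y, rd (op x y) y = x) (x : X) :
    Function.Injective (fun y => op y x) :=
  Function.LeftInverse.injective (g := fun y => rd y x) fun y => hrd₂ y x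

theorem rd_self (hidem : ∀ x, op x x = x) (hrd₂ : ∀ x y, rd (op x y) y = x) (x : X) :
    rd x x = x := by
  simpa only [hidem] using hrd₂ x x

theorem op_rd_rd_eq_iff {u : X} (hinj : Function.Injective (op u)) (hidem : ∀ x, op x x = x)
    (hrd₁ : ∀ x y, op (rd x y) y = x) (hrd₂ : ∀ x y, rd (op x y) y = x) (x : X) :
    op (rd u (rd u x)) x = u ↔ x = u := by
  constructor
  · intro h
    have hrd_eq : rd u (rd u x) = rd u x := op_left_injective hrd₂ x (h.trans (hrd₁ u x).symm)
    have hrd_u : rd u x = u := by simpa only [hrd_eq, hidem] using hrd₁ u (rd u x)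
    exact hinj (by simpa only [hrd_u, hidem] using hrd₁ u x)
  · rintro rfl
    rw [rd_self hidem hrd₂, rd_self hidem hrd₂, hidem]

end RightDivision

section ConstantCocycle

variable {X G : Type*} [Group G] {op : X → X → X} {β : X → X → G}

theorem cocycle_eq_of_op_eq {u a b x : X}
    (hcc : ∀ x y z, β (op x y) (op x z) * β x z = β x (op y z) * β y z)
    (hnorm : ∀ x, β x u = 1) (hu : ∀ w, β u w = 1) (hab : op a b = u) (hbx : op b x = u) :
    β a x = β b x := by
  simpa only [hab, hbx, hnorm, hu, one_mul] using hcc a b x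

theorem cocycle_left_eq_one {rd : X → X → X} {u : X} (hidem : ∀ x, op x x = x)
    (hrd₁ : ∀ x y, op (rd x y) y = x)
    (hcc : ∀ x y z, β (op x y) (op x z) * β x z = β x (op y z) * β y z)
    (hnorm : ∀ x, β x u = 1) (w : X) :
    β u w = 1 := by
  simpa only [hidem, hnorm, hrd₁, mul_one] using (hcc u (rd w u) u).symm

end ConstantCocycle

theorem normalized_cocycle_prop_general {X : Type*} {G : Type*} [Group G]
    (op : X → X → X) (rd : X → X → X) (u : X)
    (hbij : ∀ x, Function.Bijective (op x))
    (hidem : ∀ x, op x x = x)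
    (hrd₁ : ∀ x y, op (rd x y) y = x)
    (hrd₂ : ∀ x y, rd (op x y) y = x)
    (β : X → X → G)
    (hcc : ∀ x y z, β (op x y) (op x z) * β x z = β x (op y z) * β y z)
    (hnorm : ∀ x, β x u = 1) :
    ∀ x : X, β (rd u (rd u x)) x = β (rd u x) x ∧
      (op (rd u (rd u x)) x = u ↔ x = u) := fun x =>
  ⟨cocycle_eq_of_op_eq hcc hnorm (cocycle_left_eq_one hidem hrd₁ hcc hnorm)
      (hrd₁ u (rd u x)) (hrd₁ u x),
    op_rd_rd_eq_iff (hbij u).1 hidem hrd₁ hrd₂ x⟩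

/-- For a `u`-normalized constant cocycle on a latin quandle:
`β(u/(u/x), x) = β(u/x, x)`, and `(u/(u/x)) ▷ x = u ↔ x = u`. -/
theorem normalized_cocycle_prop {X : Type*} {G : Type*} [Group G]
    (op : X → X → X) (rd : X → X → X) (u : X)
    (hbij : ∀ x, Function.Bijective (op x))
    (hdist : ∀ x y z, op x (op y z) = op (op x y) (op x z))
    (hidem : ∀ x, op x x = x)
    (hlatin : ∀ x, Function.Bijective (fun y => op y x))
    (hrd₁ : ∀ x y, op (rd x y) y = x)
    (hrd₂ : ∀ x y, rd (op x y) y = x)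
    (β : X → X → G)
    (hcc : ∀ x y z, β (op x y) (op x z) * β x z = β x (op y z) * β y z)
    (hcq : ∀ x, β x x = 1)
    (hnorm : ∀ x, β x u = 1) :
    ∀ x : X, β (rd u (rd u x)) x = β (rd u x) x ∧
      (op (rd u (rd u x)) x = u ↔ x = u) :=
  normalized_cocycle_prop_general op rd u hbij hidem hrd₁ hrd₂ β hcc hnorm
end

section
/- Let X be a latin quandle, u ∈ X, and define f : X × X → X × X by f(x, y) = (x ▷ (y/u), x ▷ u). Then f is a bijection, with inverse (x, y) ↦ (y/u, ((y/u)\x) ▷ u), and every u-normalized constant cocycle β satisfies β(f(x, y)) = β(x, y) for all x, y. -/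
section QuandleDivision

variable {X : Type*} (op ld rd : X → X → X) (u : X)

theorem leftInverse_of_divisions
    (hld₂ : ∀ x y, ld x (op x y) = y)
    (hrd₁ : ∀ x y, op (rd x y) y = x)
    (hrd₂ : ∀ x y, rd (op x y) y = x) :
    Function.LeftInverse
      (fun p : X × X => (rd p.2 u, op (ld (rd p.2 u) p.1) u))
      (fun p : X × X => (op p.1 (rd p.2 u), op p.1 u)) := by
  intro p
  simp only [hrd₂, hld₂, hrd₁]

theorem rightInverse_of_divisions
    (hld₁ : ∀ x y, op x (ld x y) = y)
    (hrd₁ : ∀ x y, op (rd x y) y = x)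
    (hrd₂ : ∀ x y, rd (op x y) y = x) :
    Function.RightInverse
      (fun p : X × X => (rd p.2 u, op (ld (rd p.2 u) p.1) u))
      (fun p : X × X => (op p.1 (rd p.2 u), op p.1 u)) := by
  intro p
  simp only [hrd₂, hld₁, hrd₁]

/-- The cocycle identity at `(x, y/u, u)`, after normalization kills both factors `β(·, u)`. -/
theorem cocycle_apply_op_rd_eq {G : Type*} [Group G] (β : X → X → G)
    (hrd₁ : ∀ x y, op (rd x y) y = x)
    (hcc : ∀ x y z, β (op x y) (op x z) * β x z = β x (op y z) * β y z)
    (hnorm : ∀ x, β x u = 1) (x y : X) :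
    β (op x (rd y u)) (op x u) = β x y := by
  have h := hcc x (rd y u) u
  rwa [hnorm, hnorm, hrd₁, mul_one, mul_one] at h

end QuandleDivision

theorem f_bijective_and_invariance_general {X : Type*} {G : Type*} [Group G]
    (op : X → X → X) (ld : X → X → X) (rd : X → X → X) (u : X)
    (hld₁ : ∀ x y, op x (ld x y) = y)
    (hld₂ : ∀ x y, ld x (op x y) = y)
    (hrd₁ : ∀ x y, op (rd x y) y = x)
    (hrd₂ : ∀ x y, rd (op x y) y = x)
    (β : X → X → G)
    (hcc : ∀ x y z, β (op x y) (op x z) * β x z = β x (op y z) * β y z)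
    (hnorm : ∀ x, β x u = 1) :
    Function.LeftInverse
        (fun p : X × X => (rd p.2 u, op (ld (rd p.2 u) p.1) u))
        (fun p : X × X => (op p.1 (rd p.2 u), op p.1 u)) ∧
    Function.RightInverse
        (fun p : X × X => (rd p.2 u, op (ld (rd p.2 u) p.1) u))
        (fun p : X × X => (op p.1 (rd p.2 u), op p.1 u)) ∧
    Function.Bijective (fun p : X × X => (op p.1 (rd p.2 u), op p.1 u)) ∧
    (∀ x y : X, β (op x (rd y u)) (op x u) = β x y) := by
  have hleft := leftInverse_of_divisions op ld rd u hld₂ hrd₁ hrd₂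
  have hright := rightInverse_of_divisions op ld rd u hld₁ hrd₁ hrd₂
  exact ⟨hleft, hright, ⟨hleft.injective, hright.surjective⟩,
    cocycle_apply_op_rd_eq op rd u β hrd₁ hcc hnorm⟩

/-- The map `f(x,y) = (x ▷ (y/u), x ▷ u)` is a bijection of `X × X`, with inverse
`(x,y) ↦ (y/u, ((y/u)\x) ▷ u)`, and every `u`-normalized constant cocycle is
`f`-invariant. -/
theorem f_bijective_and_invariance {X : Type*} {G : Type*} [Group G]
    (op : X → X → X) (ld : X → X → X) (rd : X → X → X) (u : X)
    (hbij : ∀ x, Function.Bijective (op x))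
    (hdist : ∀ x y z, op x (op y z) = op (op x y) (op x z))
    (hidem : ∀ x, op x x = x)
    (hlatin : ∀ x, Function.Bijective (fun y => op y x))
    (hld₁ : ∀ x y, op x (ld x y) = y)
    (hld₂ : ∀ x y, ld x (op x y) = y)
    (hrd₁ : ∀ x y, op (rd x y) y = x)
    (hrd₂ : ∀ x y, rd (op x y) y = x)
    (β : X → X → G)
    (hcc : ∀ x y z, β (op x y) (op x z) * β x z = β x (op y z) * β y z)
    (hcq : ∀ x, β x x = 1)
    (hnorm : ∀ x, β x u = 1) :
    Function.LeftInverse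
        (fun p : X × X => (rd p.2 u, op (ld (rd p.2 u) p.1) u))
        (fun p : X × X => (op p.1 (rd p.2 u), op p.1 u)) ∧
    Function.RightInverse
        (fun p : X × X => (rd p.2 u, op (ld (rd p.2 u) p.1) u))
        (fun p : X × X => (op p.1 (rd p.2 u), op p.1 u)) ∧
    Function.Bijective (fun p : X × X => (op p.1 (rd p.2 u), op p.1 u)) ∧
    (∀ x y : X, β (op x (rd y u)) (op x u) = β x y) :=
  f_bijective_and_invariance_general op ld rd u hld₁ hld₂ hrd₁ hrd₂ β hcc hnorm
end

section
/- Let X be a latin quandle, u ∈ X, G a group, and β : X × X → G a constant quandle cocycle. Then β(u, x) = 1 for all x ∈ X if and only if β(u ▷ x, u ▷ y) = β(x, y) for all x, y ∈ X. -/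
/-! Both directions read off the cocycle identity with `u` in the first slot,
`β(u ▷ x, u ▷ y) · β(u, y) = β(u, x ▷ y) · β(x, y)`. If `β(u, ·) = 1` it is the invariance.
Conversely, at `y = u` invariance and `β(u, u) = 1` cancel everything except `β(u, x ▷ u) = 1`,
and `x ↦ x ▷ u` is onto because `X` is latin. -/

section ConstantCocycle

variable {X G : Type*} [Group G] {op : X → X → X} {β : X → X → G}

theorem cocycle_invariant_of_left_eq_one
    (hcc : ∀ x y z, β (op x y) (op x z) * β x z = β x (op y z) * β y z)
    {u : X} (hu : ∀ x, β u x = 1) (x y : X) :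
    β (op u x) (op u y) = β x y := by
  simpa only [hu, mul_one, one_mul] using hcc u x y

theorem cocycle_left_eq_one_of_invariant
    (hcc : ∀ x y z, β (op x y) (op x z) * β x z = β x (op y z) * β y z)
    {u : X} (huu : β u u = 1) (hinv : ∀ x y, β (op u x) (op u y) = β x y) (y : X) :
    β u (op y u) = 1 := by
  have h := hcc u y u
  rw [hinv, huu, mul_one] at h
  exact mul_eq_right.mp h.symm

end ConstantCocycle

theorem g_invariance_iff_general {X : Type*} {G : Type*} [Group G]
    (op : X → X → X) (u : X)
    (hlatin : ∀ x, Function.Bijective (fun y => op y x))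
    (β : X → X → G)
    (hcc : ∀ x y z, β (op x y) (op x z) * β x z = β x (op y z) * β y z)
    (hcq : ∀ x, β x x = 1) :
    (∀ x : X, β u x = 1) ↔ (∀ x y : X, β (op u x) (op u y) = β x y) := by
  refine ⟨cocycle_invariant_of_left_eq_one hcc, fun hinv x => ?_⟩
  obtain ⟨y, rfl⟩ := (hlatin u).surjective x
  exact cocycle_left_eq_one_of_invariant hcc (hcq u) hinv y

/-- For a constant cocycle `β` on a latin quandle: `β(u,·) = 1` iff `β` is
invariant under `g(x,y) = (u ▷ x, u ▷ y)`. -/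
theorem g_invariance_iff {X : Type*} {G : Type*} [Group G]
    (op : X → X → X) (u : X)
    (hbij : ∀ x, Function.Bijective (op x))
    (hdist : ∀ x y z, op x (op y z) = op (op x y) (op x z))
    (hidem : ∀ x, op x x = x)
    (hlatin : ∀ x, Function.Bijective (fun y => op y x))
    (β : X → X → G)
    (hcc : ∀ x y z, β (op x y) (op x z) * β x z = β x (op y z) * β y z)
    (hcq : ∀ x, β x x = 1) :
    (∀ x : X, β u x = 1) ↔ (∀ x y : X, β (op u x) (op u y) = β x y) :=
  g_invariance_iff_general op u hlatin β hcc hcq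
end

section
/- Let X be a latin quandle and u ∈ X. Define h : X × X → X × X by h(x, y) = ((y/(x\u)) ▷ x, y). Then h is a bijection with inverse k(x, y) = (u/(((x ▷ y)/u)\y), y), and every u-normalized constant cocycle β satisfies β(h(x, y)) = β(x, y) for all x, y. -/
/-!
Put `z = x\u` and `a = y/(x\u)`, so that `a ▷ z = y` and `x ▷ z = u`. Left distributivity gives
`(a ▷ x) ▷ y = (a ▷ x) ▷ (a ▷ z) = a ▷ (x ▷ z) = a ▷ u`, from which `k` recovers `a`, then `z`, then
`x`; the right inverse property is the same computation read backwards. For the cocycle, the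
2-cocycle identity at the triples `(a, x, z)` and `(x, a, z)`, with `β(a, u) = β(x ▷ a, u) = 1`,
expresses both `β(a ▷ x, a ▷ z) · β(a, z)` and `β(x, a ▷ z) · β(a, z)` as `β(x, z)`.
-/

section LatinQuandle

variable {X : Type*} {op ld rd : X → X → X}

theorem ld_eq_of_op_eq (hld₂ : ∀ x y, ld x (op x y) = y) {a b c : X} (h : op a b = c) :
    ld a c = b :=
  h ▸ hld₂ a b

theorem rd_eq_of_op_eq (hrd₂ : ∀ x y, rd (op x y) y = x) {a b c : X} (h : op a b = c) :
    rd c b = a :=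
  h ▸ hrd₂ a b

def shearMap (op ld rd : X → X → X) (u : X) (p : X × X) : X × X :=
  (op (rd p.2 (ld p.1 u)) p.1, p.2)

def shearInv (op ld rd : X → X → X) (u : X) (p : X × X) : X × X :=
  (rd u (ld (rd (op p.1 p.2) u) p.2), p.2)

theorem shearInv_leftInverse (hdist : ∀ x y z, op x (op y z) = op (op x y) (op x z))
    (hld₁ : ∀ x y, op x (ld x y) = y) (hld₂ : ∀ x y, ld x (op x y) = y)
    (hrd₁ : ∀ x y, op (rd x y) y = x) (hrd₂ : ∀ x y, rd (op x y) y = x) (u : X) :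
    Function.LeftInverse (shearInv op ld rd u) (shearMap op ld rd u) := by
  rintro ⟨x, y⟩
  refine Prod.ext ?_ rfl
  change rd u (ld (rd (op (op (rd y (ld x u)) x) y) u) y) = x
  set z := ld x u
  set a := rd y z
  have hz : op x z = u := hld₁ x u
  have ha : op a z = y := hrd₁ y z
  have hay : op (op a x) y = op a u := by rw [← ha, ← hdist, hz]
  rw [rd_eq_of_op_eq hrd₂ hay.symm, ld_eq_of_op_eq hld₂ ha, rd_eq_of_op_eq hrd₂ hz]

theorem shearInv_rightInverse (hdist : ∀ x y z, op x (op y z) = op (op x y) (op x z))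
    (hld₁ : ∀ x y, op x (ld x y) = y) (hld₂ : ∀ x y, ld x (op x y) = y)
    (hrd₁ : ∀ x y, op (rd x y) y = x) (hrd₂ : ∀ x y, rd (op x y) y = x) (u : X) :
    Function.RightInverse (shearInv op ld rd u) (shearMap op ld rd u) := by
  rintro ⟨x, y⟩
  refine Prod.ext ?_ rfl
  change op (rd y (ld (rd u (ld (rd (op x y) u) y)) u)) (rd u (ld (rd (op x y) u) y)) = x
  set c := rd (op x y) u
  set t := ld c y
  set w := rd u t
  have hc : op c u = op x y := hrd₁ (op x y) u
  have ht : op c t = y := hld₁ c y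
  have hw : op w t = u := hrd₁ u t
  have hcw : op (op c w) y = op x y :=
    calc op (op c w) y = op (op c w) (op c t) := by rw [ht]
      _ = op x y := by rw [← hdist, hw, hc]
  rw [ld_eq_of_op_eq hld₂ hw, rd_eq_of_op_eq hrd₂ ht]
  exact (rd_eq_of_op_eq hrd₂ hcw).symm.trans (hrd₂ x y)

theorem cocycle_op_left_eq {G : Type*} [Group G] {β : X → X → G} {u : X}
    (hcc : ∀ x y z, β (op x y) (op x z) * β x z = β x (op y z) * β y z)
    (hnorm : ∀ x, β x u = 1) {a x z : X} (hz : op x z = u) :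
    β (op a x) (op a z) = β x (op a z) := by
  have hax : β (op a x) (op a z) * β a z = β x z := by
    simpa only [hz, hnorm, one_mul] using hcc a x z
  have hxa : β x (op a z) * β a z = β x z := by
    simpa only [hz, hnorm, one_mul] using (hcc x a z).symm
  exact mul_right_cancel (hax.trans hxa.symm)

end LatinQuandle

theorem h_bijective_and_invariance_general {X : Type*} {G : Type*} [Group G]
    (op : X → X → X) (ld : X → X → X) (rd : X → X → X) (u : X)
    (hdist : ∀ x y z, op x (op y z) = op (op x y) (op x z))
    (hld₁ : ∀ x y, op x (ld x y) = y)
    (hld₂ : ∀ x y, ld x (op x y) = y)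
    (hrd₁ : ∀ x y, op (rd x y) y = x)
    (hrd₂ : ∀ x y, rd (op x y) y = x)
    (β : X → X → G)
    (hcc : ∀ x y z, β (op x y) (op x z) * β x z = β x (op y z) * β y z)
    (hnorm : ∀ x, β x u = 1) :
    Function.LeftInverse
        (fun p : X × X => (rd u (ld (rd (op p.1 p.2) u) p.2), p.2))
        (fun p : X × X => (op (rd p.2 (ld p.1 u)) p.1, p.2)) ∧
    Function.RightInverse
        (fun p : X × X => (rd u (ld (rd (op p.1 p.2) u) p.2), p.2))
        (fun p : X × X => (op (rd p.2 (ld p.1 u)) p.1, p.2)) ∧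
    Function.Bijective (fun p : X × X => (op (rd p.2 (ld p.1 u)) p.1, p.2)) ∧
    (∀ x y : X, β (op (rd y (ld x u)) x) y = β x y) := by
  have hleft := shearInv_leftInverse hdist hld₁ hld₂ hrd₁ hrd₂ u
  have hright := shearInv_rightInverse hdist hld₁ hld₂ hrd₁ hrd₂ u
  refine ⟨hleft, hright, ⟨hleft.injective, hright.surjective⟩, fun x y => ?_⟩
  simpa only [hrd₁] using cocycle_op_left_eq (a := rd y (ld x u)) hcc hnorm (hld₁ x u)

/-- The map `h(x,y) = ((y/(x\u)) ▷ x, y)` is a bijection of `X × X` with inverse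
`k(x,y) = (u/(((x ▷ y)/u)\y), y)`, and every `u`-normalized constant cocycle is
`h`-invariant. -/
theorem h_bijective_and_invariance {X : Type*} {G : Type*} [Group G]
    (op : X → X → X) (ld : X → X → X) (rd : X → X → X) (u : X)
    (hbij : ∀ x, Function.Bijective (op x))
    (hdist : ∀ x y z, op x (op y z) = op (op x y) (op x z))
    (hidem : ∀ x, op x x = x)
    (hlatin : ∀ x, Function.Bijective (fun y => op y x))
    (hld₁ : ∀ x y, op x (ld x y) = y)
    (hld₂ : ∀ x y, ld x (op x y) = y)
    (hrd₁ : ∀ x y, op (rd x y) y = x)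
    (hrd₂ : ∀ x y, rd (op x y) y = x)
    (β : X → X → G)
    (hcc : ∀ x y z, β (op x y) (op x z) * β x z = β x (op y z) * β y z)
    (hcq : ∀ x, β x x = 1)
    (hnorm : ∀ x, β x u = 1) :
    Function.LeftInverse
        (fun p : X × X => (rd u (ld (rd (op p.1 p.2) u) p.2), p.2))
        (fun p : X × X => (op (rd p.2 (ld p.1 u)) p.1, p.2)) ∧
    Function.RightInverse
        (fun p : X × X => (rd u (ld (rd (op p.1 p.2) u) p.2), p.2))
        (fun p : X × X => (op (rd p.2 (ld p.1 u)) p.1, p.2)) ∧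
    Function.Bijective (fun p : X × X => (op (rd p.2 (ld p.1 u)) p.1, p.2)) ∧
    (∀ x y : X, β (op (rd y (ld x u)) x) y = β x y) :=
  h_bijective_and_invariance_general op ld rd u hdist hld₁ hld₂ hrd₁ hrd₂ β hcc hnorm
end

section
/- Let X be a latin quandle, u ∈ X, and define f(x, y) = (x ▷ (y/u), x ▷ u). Then f²(x, y) = (x, y) implies f(x, y) = (x, y); that is, no orbit of f on X × X has size exactly 2. Moreover f(x, y) = (x, y) if and only if y = x ▷ u. -/
/-!
Right division makes every right translation injective. If `f² (x, y) = (x, y)`, the first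
coordinate reads `(x ▷ (y/u)) ▷ x = x = x ▷ x`, so `x ▷ (y/u) = x`; the second coordinate
`(x ▷ (y/u)) ▷ u = y` then becomes `x ▷ u = y`, which is exactly the fixed-point condition.
-/

namespace LatinQuandle

variable {X : Type*} (op rd : X → X → X) (u : X)

def orbitMap (p : X × X) : X × X := (op p.1 (rd p.2 u), op p.1 u)

variable {op rd}

theorem op_right_injective (hrd₂ : ∀ x y, rd (op x y) y = x) (z : X) :
    Function.Injective (fun y => op y z) :=
  Function.LeftInverse.injective (g := fun y => rd y z) (hrd₂ · z)

theorem orbitMap_orbitMap (hrd₂ : ∀ x y, rd (op x y) y = x) (x y : X) :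
    orbitMap op rd u (orbitMap op rd u (x, y)) =
      (op (op x (rd y u)) x, op (op x (rd y u)) u) := by
  simp only [orbitMap, hrd₂]

theorem orbitMap_eq_self_iff (hidem : ∀ x, op x x = x) (hrd₂ : ∀ x y, rd (op x y) y = x)
    (x y : X) : orbitMap op rd u (x, y) = (x, y) ↔ y = op x u := by
  constructor
  · intro h
    exact (Prod.mk.inj h).2.symm
  · rintro rfl
    simp only [orbitMap, hrd₂, hidem]

theorem orbitMap_eq_self_of_orbitMap_orbitMap_eq_self (hidem : ∀ x, op x x = x)
    (hrd₂ : ∀ x y, rd (op x y) y = x) {x y : X}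
    (h : orbitMap op rd u (orbitMap op rd u (x, y)) = (x, y)) :
    orbitMap op rd u (x, y) = (x, y) := by
  rw [orbitMap_orbitMap u hrd₂] at h
  obtain ⟨hfst, hsnd⟩ := Prod.mk.inj h
  have hx : op x (rd y u) = x :=
    op_right_injective hrd₂ x (show op (op x (rd y u)) x = op x x by rw [hfst, hidem])
  rw [orbitMap_eq_self_iff u hidem hrd₂, ← hsnd, hx]

end LatinQuandle

open LatinQuandle in
theorem f_orbit_sizes_general {X : Type*} (op : X → X → X) (rd : X → X → X) (u : X)
    (hidem : ∀ x, op x x = x)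
    (hrd₂ : ∀ x y, rd (op x y) y = x) :
    ∀ x y : X,
      ((fun p : X × X => (op p.1 (rd p.2 u), op p.1 u))
        ((fun p : X × X => (op p.1 (rd p.2 u), op p.1 u)) (x, y)) = (x, y) →
        (fun p : X × X => (op p.1 (rd p.2 u), op p.1 u)) (x, y) = (x, y)) ∧
      ((fun p : X × X => (op p.1 (rd p.2 u), op p.1 u)) (x, y) = (x, y) ↔
        y = op x u) :=
  fun _ _ => ⟨orbitMap_eq_self_of_orbitMap_orbitMap_eq_self u hidem hrd₂,
    orbitMap_eq_self_iff u hidem hrd₂ _ _⟩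

/-- For `f(x,y) = (x ▷ (y/u), x ▷ u)` on a latin quandle: `f²(p) = p` implies
`f(p) = p` (no orbit of size exactly 2), and `f(x,y) = (x,y) ↔ y = x ▷ u`. -/
theorem f_orbit_sizes {X : Type*} (op : X → X → X) (rd : X → X → X) (u : X)
    (hbij : ∀ x, Function.Bijective (op x))
    (hdist : ∀ x y z, op x (op y z) = op (op x y) (op x z))
    (hidem : ∀ x, op x x = x)
    (hlatin : ∀ x, Function.Bijective (fun y => op y x))
    (hrd₁ : ∀ x y, op (rd x y) y = x)
    (hrd₂ : ∀ x y, rd (op x y) y = x) :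
    ∀ x y : X,
      ((fun p : X × X => (op p.1 (rd p.2 u), op p.1 u))
        ((fun p : X × X => (op p.1 (rd p.2 u), op p.1 u)) (x, y)) = (x, y) →
        (fun p : X × X => (op p.1 (rd p.2 u), op p.1 u)) (x, y) = (x, y)) ∧
      ((fun p : X × X => (op p.1 (rd p.2 u), op p.1 u)) (x, y) = (x, y) ↔
        y = op x u) :=
  f_orbit_sizes_general op rd u hidem hrd₂
end

section
/- Let X be a latin quandle and u ∈ X. Define f(x, y) = (x ▷ (y/u), x ▷ u), g(x, y) = (u ▷ x, u ▷ y), and h(x, y) = ((y/(x\u)) ▷ x, y) on X × X. Then f ∘ g = g ∘ f and h ∘ g = g ∘ h. -/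
/-! Left distributivity makes the left translation `u ▷ -` an endomorphism of `(X, ▷)` fixing `u`,
and the division laws force any endomorphism to preserve both divisions. Hence `g = (u ▷ -) × (u ▷ -)`
passes through every operation in the formulas for `f` and `h`. -/

section

variable {X : Type*} {op ld rd : X → X → X} {φ : X → X}

theorem map_rd_of_map_op (hφ : ∀ a b, φ (op a b) = op (φ a) (φ b))
    (hrd₁ : ∀ x y, op (rd x y) y = x) (hrd₂ : ∀ x y, rd (op x y) y = x) (a b : X) :
    rd (φ a) (φ b) = φ (rd a b) := by
  conv_lhs => rw [← hrd₁ a b, hφ, hrd₂]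

theorem map_ld_of_map_op (hφ : ∀ a b, φ (op a b) = op (φ a) (φ b))
    (hld₁ : ∀ x y, op x (ld x y) = y) (hld₂ : ∀ x y, ld x (op x y) = y) (a b : X) :
    ld (φ a) (φ b) = φ (ld a b) := by
  conv_lhs => rw [← hld₁ a b, hφ, hld₂]

end

theorem fg_gf_hg_gh_general {X : Type*} (op : X → X → X)
    (ld : X → X → X) (rd : X → X → X) (u : X)
    (hdist : ∀ x y z, op x (op y z) = op (op x y) (op x z))
    (hidem : ∀ x, op x x = x)
    (hld₁ : ∀ x y, op x (ld x y) = y)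
    (hld₂ : ∀ x y, ld x (op x y) = y)
    (hrd₁ : ∀ x y, op (rd x y) y = x)
    (hrd₂ : ∀ x y, rd (op x y) y = x) :
    ((fun p : X × X => (op p.1 (rd p.2 u), op p.1 u)) ∘
      (fun p : X × X => (op u p.1, op u p.2)) =
        (fun p : X × X => (op u p.1, op u p.2)) ∘
          (fun p : X × X => (op p.1 (rd p.2 u), op p.1 u))) ∧
    ((fun p : X × X => (op (rd p.2 (ld p.1 u)) p.1, p.2)) ∘
      (fun p : X × X => (op u p.1, op u p.2)) =
        (fun p : X × X => (op u p.1, op u p.2)) ∘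
          (fun p : X × X => (op (rd p.2 (ld p.1 u)) p.1, p.2))) := by
  have map_rd := map_rd_of_map_op (hdist u) hrd₁ hrd₂
  have map_ld := map_ld_of_map_op (hdist u) hld₁ hld₂
  have map_op (a b : X) : op (op u a) (op u b) = op u (op a b) := (hdist u a b).symm
  have fix_u : op u u = u := hidem u
  refine ⟨funext fun ⟨x, y⟩ => ?_, funext fun ⟨x, y⟩ => ?_⟩
  · have rd_u := map_rd y u
    have op_u := map_op x u
    rw [fix_u] at rd_u op_u
    simp only [Function.comp_apply, rd_u, op_u, map_op]
  · have ld_u := map_ld x u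
    rw [fix_u] at ld_u
    simp only [Function.comp_apply, ld_u, map_rd, map_op]

/-- On a latin quandle, the maps `f(x,y) = (x ▷ (y/u), x ▷ u)` and
`h(x,y) = ((y/(x\u)) ▷ x, y)` commute with `g(x,y) = (u ▷ x, u ▷ y)`. -/
theorem fg_gf_hg_gh {X : Type*} (op : X → X → X)
    (ld : X → X → X) (rd : X → X → X) (u : X)
    (hbij : ∀ x, Function.Bijective (op x))
    (hdist : ∀ x y z, op x (op y z) = op (op x y) (op x z))
    (hidem : ∀ x, op x x = x)
    (hlatin : ∀ x, Function.Bijective (fun y => op y x))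
    (hld₁ : ∀ x y, op x (ld x y) = y)
    (hld₂ : ∀ x y, ld x (op x y) = y)
    (hrd₁ : ∀ x y, op (rd x y) y = x)
    (hrd₂ : ∀ x y, rd (op x y) y = x) :
    ((fun p : X × X => (op p.1 (rd p.2 u), op p.1 u)) ∘
      (fun p : X × X => (op u p.1, op u p.2)) =
        (fun p : X × X => (op u p.1, op u p.2)) ∘
          (fun p : X × X => (op p.1 (rd p.2 u), op p.1 u))) ∧
    ((fun p : X × X => (op (rd p.2 (ld p.1 u)) p.1, p.2)) ∘
      (fun p : X × X => (op u p.1, op u p.2)) =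
        (fun p : X × X => (op u p.1, op u p.2)) ∘
          (fun p : X × X => (op (rd p.2 (ld p.1 u)) p.1, p.2))) :=
  fg_gf_hg_gh_general op ld rd u hdist hidem hld₁ hld₂ hrd₁ hrd₂
end

section
/- Let X = Q(A, α) be a connected affine quandle and β a 0-normalized constant quandle cocycle with values in a group G. Then β(n·y + x, y) = β(x, y) for every integer n and all x, y ∈ A; in particular β(n·x, x) = 1 for every integer n and all x ∈ A. -/
/-!
Write `y = u - α u`, which connectedness allows for every `y`. With `w = α⁻¹(-v) + v`, chosen so
that `v ▷ w = 0`, the cocycle identities at `(v + u, v, w)` and `(v, v + u, w)` express `β(v, w)` as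
`β(v + y, y) β(v + u, w)` and as `β(v, y) β(v + u, w)` respectively. Hence `β(·, y)` is
`y`-periodic, and so `β(n y + x, y) = β(x, y)`. Finally `β(0, y) = 1` is the identity at `(0, u, 0)`.
-/

section

variable {A G : Type*} [AddCommGroup A] [Group G]

def IsAffineQuandleCocycle (α : A ≃+ A) (β : A → A → G) : Prop :=
  ∀ x y z : A, β (x - α x + α y) (x - α x + α z) * β x z = β x (y - α y + α z) * β y z

namespace IsAffineQuandleCocycle

variable {α : A ≃+ A} {β : A → A → G}

theorem zero_left (hβ : IsAffineQuandleCocycle α β) (hnorm : ∀ x, β x 0 = 1) (u : A) :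
    β 0 (u - α u) = 1 := by
  simpa [hnorm] using (hβ 0 u 0).symm

theorem periodic_left (hβ : IsAffineQuandleCocycle α β) (hnorm : ∀ x, β x 0 = 1) (u : A) :
    Function.Periodic (fun x => β x (u - α u)) (u - α u) := by
  intro v
  set w := α.symm (-v) + v
  have hw : α w = α v - v := by rw [map_add, AddEquiv.apply_symm_apply, neg_add_eq_sub]
  have h1 : β (v + (u - α u)) (u - α u) * β (v + u) w = β v w := by
    convert hβ (v + u) v w using 2
    · congr 1 <;> simp only [map_add, hw] <;> abel
    · rw [hw, show v - α v + (α v - v) = 0 by abel, hnorm, one_mul]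
  have h2 : β v (u - α u) * β (v + u) w = β v w := by
    convert (hβ v (v + u) w).symm using 2
    · congr 1; simp only [map_add, hw]; abel
    · rw [hw, show v - α v + (α v - v) = 0 by abel, hnorm, one_mul]
  exact mul_right_cancel (h1.trans h2.symm)

end IsAffineQuandleCocycle

end

theorem affine_normalized_cocycle_translation_general {A : Type*} [AddCommGroup A]
    {G : Type*} [Group G] (α : A ≃+ A)
    (hconn : Function.Bijective (fun x : A => x - α x))
    (β : A → A → G)
    (hcc : ∀ x y z : A,
      β (x - α x + α y) (x - α x + α z) * β x z =
        β x (y - α y + α z) * β y z)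
    (hnorm : ∀ x : A, β x 0 = 1) :
    (∀ (n : ℤ) (x y : A), β (n • y + x) y = β x y) ∧
    (∀ (n : ℤ) (x : A), β (n • x) x = 1) := by
  have hper (y : A) : Function.Periodic (fun x => β x y) y := by
    obtain ⟨u, rfl⟩ := hconn.surjective y
    exact IsAffineQuandleCocycle.periodic_left hcc hnorm u
  refine ⟨fun n x y => ?_, fun n x => ?_⟩
  · rw [add_comm]
    exact (hper y).zsmul n x
  · obtain ⟨u, rfl⟩ := hconn.surjective x
    exact ((hper _).zsmul_eq n).trans (IsAffineQuandleCocycle.zero_left hcc hnorm u)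

/-- On a connected affine quandle `Q(A, α)` with `op x y = (1-α)(x) + α(y)`,
every `0`-normalized constant cocycle `β` satisfies `β(n·y + x, y) = β(x, y)`
for every integer `n`; in particular `β(n·x, x) = 1`. -/
theorem affine_normalized_cocycle_translation {A : Type*} [AddCommGroup A]
    {G : Type*} [Group G] (α : A ≃+ A)
    (hconn : Function.Bijective (fun x : A => x - α x))
    (β : A → A → G)
    (hcc : ∀ x y z : A,
      β (x - α x + α y) (x - α x + α z) * β x z =
        β x (y - α y + α z) * β y z)
    (hcq : ∀ x : A, β x x = 1)
    (hnorm : ∀ x : A, β x 0 = 1) :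
    (∀ (n : ℤ) (x y : A), β (n • y + x) y = β x y) ∧
    (∀ (n : ℤ) (x : A), β (n • x) x = 1) :=
  affine_normalized_cocycle_translation_general α hconn β hcc hnorm
end

section
/- Let X = Q(Z_m, λ_n) be a connected affine quandle over the cyclic group Z_m, where λ_n(x) = n·x with gcd(m, n) = gcd(m, n−1) = 1. Then every 0-normalized constant quandle cocycle β : X × X → G with values in any group G is identically 1. Consequently H²_c(X, G) is trivial for every group G. -/
/-!
By the cocycle identity, the permutations `θ a (z, g) = (z + (1 - c) a, β(a, c⁻¹ z) g)`
of `X × G` satisfy `θ ((1 - c) u + y) = θ u * θ y * (θ (c u))⁻¹`. As `ℤ_m` is cyclic, every `θ w` is a word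
`θ 1 ^ k * (θ c ^ k)⁻¹`, and the relation at `u = c` shows that `θ 1` and `θ c` commute.
Hence `θ` is additive, and comparing `θ (a + y)` with `θ a * θ y` at `(0, 1)` gives
`β(a, c⁻¹ (1 - c) y) = 1`. Any cocycle becomes `0`-normalized after twisting it by the
coboundary of `γ s = β((1 - c)⁻¹ s, 0)`.
-/

def IsTwistedHom {R H : Type*} [Ring R] [Group H] (c : R) (θ : R → H) : Prop :=
  ∀ u y, θ ((1 - c) * u + y) = θ u * θ y * (θ (c * u))⁻¹

namespace IsTwistedHom

theorem apply_mul_intCast_add {R H : Type*} [Ring R] [Group H] {c : R} {θ : R → H}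
    (hθ : IsTwistedHom c θ) (k : ℤ) (y : R) :
    θ ((1 - c) * k + y) = θ 1 ^ k * θ y * (θ c ^ k)⁻¹ := by
  have step : ∀ (k : ℤ) y, θ 1 ^ (-(k + 1)) * θ ((1 - c) * ↑(k + 1) + y) * θ c ^ (k + 1) =
      θ 1 ^ (-k) * θ ((1 - c) * k + y) * θ c ^ k := by
    intro k y
    have e : (1 - c) * ↑(k + 1) + y = (1 - c) * 1 + ((1 - c) * k + y) := by
      push_cast; rw [mul_add_one, mul_one]; abel
    rw [e, hθ, mul_one]
    group
  have hconst : ∀ y, θ 1 ^ (-k) * θ ((1 - c) * k + y) * θ c ^ k = θ y := by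
    induction k using Int.induction_on with
    | zero => simp
    | succ i ih => intro y; rw [step, ih]
    | pred i ih => intro y; rw [← ih y, ← step (-i - 1) y, sub_add_cancel]
  rw [← hconst y]
  group

variable {m : ℕ} {H : Type*} [Group H] {c : ZMod m} {θ : ZMod m → H}

theorem commute (hθ : IsTwistedHom c θ) (hc1 : IsUnit (1 - c))
    (h0 : θ 0 = 1) (w w' : ZMod m) : Commute (θ w) (θ w') := by
  have hAB : Commute (θ 1) (θ c) := by
    obtain ⟨k, rfl⟩ := ZMod.intCast_surjective c
    have hrel : ∀ y, θ k * θ y * (θ (k * k))⁻¹ = θ 1 ^ k * θ y * (θ k ^ k)⁻¹ := fun y => by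
      rw [← hθ, ← hθ.apply_mul_intCast_add]
    have h0' := hrel 0
    rw [h0, mul_one, mul_one] at h0'
    have hconj : θ k * θ 1 * (θ k)⁻¹ = θ 1 := calc
      θ k * θ 1 * (θ k)⁻¹ = θ k * θ 1 * (θ (k * k))⁻¹ * (θ k * (θ (k * k))⁻¹)⁻¹ := by group
      _ = θ 1 ^ k * θ 1 * (θ k ^ k)⁻¹ * (θ 1 ^ k * (θ k ^ k)⁻¹)⁻¹ := by rw [hrel, h0']
      _ = θ 1 := by group
    exact (mul_inv_eq_iff_eq_mul.mp hconj).symm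
  have hpow : ∀ w, ∃ k : ℤ, θ w = θ 1 ^ k * (θ c ^ k)⁻¹ := fun w => by
    obtain ⟨j, rfl⟩ := hc1.dvd (a := w)
    obtain ⟨k, rfl⟩ := ZMod.intCast_surjective j
    exact ⟨k, by simpa [h0] using hθ.apply_mul_intCast_add k 0⟩
  obtain ⟨k, hk⟩ := hpow w
  obtain ⟨k', hk'⟩ := hpow w'
  rw [hk, hk']
  exact (((Commute.refl _).zpow_zpow _ _).mul_right (hAB.zpow_zpow _ _).inv_right).mul_left
    ((hAB.symm.zpow_zpow _ _).mul_right ((Commute.refl _).zpow_zpow _ _).inv_right).inv_left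

theorem map_add (hθ : IsTwistedHom c θ) (hc1 : IsUnit (1 - c))
    (h0 : θ 0 = 1) (a y : ZMod m) : θ (a + y) = θ a * θ y := by
  obtain ⟨u, rfl⟩ := hc1.dvd (a := a)
  have ha : θ ((1 - c) * u) = θ u * (θ (c * u))⁻¹ := by simpa [h0] using hθ u 0
  rw [hθ, ha, mul_assoc, (hθ.commute hc1 h0 y (c * u)).inv_right.eq, ← mul_assoc]

end IsTwistedHom

section AffineCocycle

variable {R G : Type*} [CommRing R] [Group G]

def IsAffineCocycle (c : R) (β : R → R → G) : Prop :=
  ∀ x y z, β ((1 - c) * x + c * y) ((1 - c) * x + c * z) * β x z =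
    β x ((1 - c) * y + c * z) * β y z

namespace IsAffineCocycle

variable {c : R} {β : R → R → G}

theorem apply_zero_left (hβ : IsAffineCocycle c β) (hc1 : IsUnit (1 - c))
    (hnorm : ∀ x, β x 0 = 1) (w : R) : β 0 w = 1 := by
  obtain ⟨y, rfl⟩ := hc1.dvd (a := w)
  simpa [hnorm] using (hβ 0 y 0).symm

theorem apply_mul_mul (hβ : IsAffineCocycle c β) (h0 : ∀ w, β 0 w = 1) (y z : R) :
    β (c * y) (c * z) = β y z := by
  simpa [h0] using hβ 0 y z

theorem coboundary_twist (hβ : IsAffineCocycle c β) (γ : R → G) :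
    IsAffineCocycle c fun a b => (γ ((1 - c) * a + c * b))⁻¹ * β a b * γ b := by
  intro x y z
  have e : (1 - c) * ((1 - c) * x + c * y) + c * ((1 - c) * x + c * z) =
      (1 - c) * x + c * ((1 - c) * y + c * z) := by ring
  simp only [e, mul_assoc, mul_inv_cancel_left]
  rw [← mul_assoc (β _ _), hβ, mul_assoc]

end IsAffineCocycle

def affineShift (u : Rˣ) (β : R → R → G) (a : R) : Equiv.Perm (R × G) where
  toFun p := (p.1 + (1 - u) * a, β a (↑u⁻¹ * p.1) * p.2)
  invFun p := (p.1 - (1 - u) * a, (β a (↑u⁻¹ * (p.1 - (1 - u) * a)))⁻¹ * p.2)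
  left_inv p := by simp
  right_inv p := by simp

variable {u : Rˣ} {β : R → R → G}

theorem affineShift_apply (a : R) (p : R × G) :
    affineShift u β a p = (p.1 + (1 - u) * a, β a (↑u⁻¹ * p.1) * p.2) := rfl

theorem affineShift_zero (h0 : ∀ w, β 0 w = 1) : affineShift u β 0 = 1 := by
  ext p <;> simp [affineShift_apply, h0]

theorem IsAffineCocycle.isTwistedHom_affineShift (hβ : IsAffineCocycle (u : R) β)
    (h0 : ∀ w, β 0 w = 1) : IsTwistedHom (u : R) (affineShift u β) := by
  refine fun a y => eq_mul_inv_of_mul_eq (Equiv.ext fun ⟨z, g⟩ => ?_)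
  have hcancel : ∀ r : R, (u : R) * (↑u⁻¹ * r) = r := fun r => by
    rw [← mul_assoc, Units.mul_inv, one_mul]
  have hcoc := hβ a (↑u⁻¹ * y) (↑u⁻¹ * (↑u⁻¹ * z))
  rw [hcancel, hcancel, ← hβ.apply_mul_mul h0 a, hcancel,
    ← hβ.apply_mul_mul h0 (↑u⁻¹ * y), hcancel, hcancel] at hcoc
  have e1 : ↑u⁻¹ * (z + (1 - u) * (u * a)) = (1 - u) * a + ↑u⁻¹ * z := by
    linear_combination (1 - (u : R)) * a * u.inv_mul
  have e2 : ↑u⁻¹ * (z + (1 - u) * y) = (1 - u) * (↑u⁻¹ * y) + ↑u⁻¹ * z := by ring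
  simp only [Equiv.Perm.mul_apply, affineShift_apply, Prod.mk.injEq]
  refine ⟨by ring, ?_⟩
  rw [e1, e2, ← mul_assoc, ← mul_assoc, hcoc]

theorem eq_one_of_affineShift_map_add (hc1 : IsUnit (1 - (u : R))) (hnorm : ∀ x, β x 0 = 1)
    (hadd : ∀ a y, affineShift u β (a + y) = affineShift u β a * affineShift u β y)
    (x y : R) : β x y = 1 := by
  obtain ⟨t, rfl⟩ := (u⁻¹.isUnit.mul hc1).dvd (a := y)
  have h := congrArg (fun f : Equiv.Perm (R × G) => (f (0, 1)).2) (hadd x t)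
  simpa [affineShift_apply, hnorm, mul_assoc] using h.symm

end AffineCocycle

namespace IsAffineCocycle

variable {m : ℕ} {G : Type*} [Group G] {c : ZMod m} {β : ZMod m → ZMod m → G}

theorem eq_one (hβ : IsAffineCocycle c β) (hc : IsUnit c) (hc1 : IsUnit (1 - c))
    (hnorm : ∀ x, β x 0 = 1) (x y : ZMod m) : β x y = 1 := by
  obtain ⟨u, rfl⟩ := hc
  have h0 := hβ.apply_zero_left hc1 hnorm
  exact eq_one_of_affineShift_map_add hc1 hnorm
    ((hβ.isTwistedHom_affineShift h0).map_add hc1 (affineShift_zero h0)) x y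

theorem exists_coboundary (hβ : IsAffineCocycle c β) (hc : IsUnit c) (hc1 : IsUnit (1 - c))
    (h00 : β 0 0 = 1) : ∃ γ : ZMod m → G, ∀ x y, β x y = γ ((1 - c) * x + c * y) * (γ y)⁻¹ := by
  obtain ⟨t, ht⟩ := hc1.exists_right_inv
  refine ⟨fun s => β (t * s) 0, fun x y => ?_⟩
  have hnorm : ∀ a, (β (t * ((1 - c) * a + c * 0)) 0)⁻¹ * β a 0 * β (t * 0) 0 = 1 := fun a => by
    rw [mul_zero, add_zero, ← mul_assoc, mul_comm t, ht, one_mul, mul_zero, h00, mul_one,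
      inv_mul_cancel]
  have h := (hβ.coboundary_twist fun s => β (t * s) 0).eq_one hc hc1 hnorm x y
  rwa [mul_assoc, inv_mul_eq_iff_eq_mul, mul_one, ← eq_mul_inv_iff_mul_eq] at h

end IsAffineCocycle

theorem cyclic_affine_simply_connected_general {m : ℕ} (c : ZMod m)
    (hc : IsUnit c) (hc1 : IsUnit (c - 1)) {G : Type*} [Group G] :
    (∀ β : ZMod m → ZMod m → G,
      (∀ x y z : ZMod m,
        β ((1 - c) * x + c * y) ((1 - c) * x + c * z) * β x z =
          β x ((1 - c) * y + c * z) * β y z) →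
      (∀ x, β x x = 1) →
      (∀ x, β x 0 = 1) →
      ∀ x y, β x y = 1) ∧
    (∀ β : ZMod m → ZMod m → G,
      (∀ x y z : ZMod m,
        β ((1 - c) * x + c * y) ((1 - c) * x + c * z) * β x z =
          β x ((1 - c) * y + c * z) * β y z) →
      (∀ x, β x x = 1) →
      ∃ γ : ZMod m → G, ∀ x y, β x y = γ ((1 - c) * x + c * y) * (γ y)⁻¹) := by
  have hc1' : IsUnit (1 - c) := by simpa using hc1.neg
  exact ⟨fun β hβ _ hnorm => IsAffineCocycle.eq_one hβ hc hc1' hnorm,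
    fun β hβ hdiag => IsAffineCocycle.exists_coboundary hβ hc hc1' (hdiag 0)⟩

/-- Let `X = Q(ℤ_m, λ_c)` be a connected affine quandle over a cyclic group,
with `x ▷ y = (1-c)x + cy` where `c` and `c - 1` are units. Then every
`0`-normalized constant cocycle with values in any group `G` is trivial, and
consequently every constant cocycle is cohomologous to the trivial one, i.e.
`H²_c(X, G) = 1`. -/
theorem cyclic_affine_simply_connected {m : ℕ} (hm : 0 < m) (c : ZMod m)
    (hc : IsUnit c) (hc1 : IsUnit (c - 1)) {G : Type*} [Group G] :
    (∀ β : ZMod m → ZMod m → G,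
      (∀ x y z : ZMod m,
        β ((1 - c) * x + c * y) ((1 - c) * x + c * z) * β x z =
          β x ((1 - c) * y + c * z) * β y z) →
      (∀ x, β x x = 1) →
      (∀ x, β x 0 = 1) →
      ∀ x y, β x y = 1) ∧
    (∀ β : ZMod m → ZMod m → G,
      (∀ x y z : ZMod m,
        β ((1 - c) * x + c * y) ((1 - c) * x + c * z) * β x z =
          β x ((1 - c) * y + c * z) * β y z) →
      (∀ x, β x x = 1) →
      ∃ γ : ZMod m → G, ∀ x y, β x y = γ ((1 - c) * x + c * y) * (γ y)⁻¹) :=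
  cyclic_affine_simply_connected_general c hc hc1
end

section
/- Let X = Q(Z_2², α) be the doubly transitive quandle of order 4, where α is an automorphism of Z_2² of order 3, and let G be a group. Then every 0-normalized constant quandle cocycle β : X × X → G is of the form β_a for a unique a ∈ G with a² = 1, where β_a takes value 1 on all pairs (x, y) with x = 0 or y = 0 or x = y, and value a on all other pairs. -/
/-!
An automorphism `α` of order 3 of the Klein four-group has no nonzero fixed point (otherwise it
would fix or swap the other two nonzero elements), so it permutes the three nonzero elements
cyclically and `α² x = x + α x`. The cocycle condition at the triples `(0, y, 0)`, `(x, α x, x)`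
and `(α x, x, α x)` then gives `β (0, ·) = 1`, `β (x, α² x) β (α x, x) = 1` and
`β (α² x, α x) = β (x, α x)`. Along the orbit `x, α x, α² x` the first relation forces
`β (x, α² x) = β (α x, x) = β (α² x, α x) = a` with `a² = 1`, and with the second one `β` takes
the value `a` on every pair of distinct nonzero elements.
-/

theorem eq_and_sq_eq_one_of_mul_eq_one_cyclic {G : Type*} [Group G] {p q r : G}
    (hpq : p * q = 1) (hqr : q * r = 1) (hrp : r * p = 1) : q = p ∧ r = p ∧ p ^ 2 = 1 := by
  have hq : q = p⁻¹ := eq_inv_of_mul_eq_one_right hpq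
  have hr : r = p := by rw [eq_inv_of_mul_eq_one_right hqr, hq, inv_inv]
  have hsq : p * p = 1 := hr ▸ hrp
  exact ⟨hq.trans (inv_eq_of_mul_eq_one_right hsq), hr, (pow_two p).trans hsq⟩

section Cocycle

variable {V : Type*} [AddCommGroup V]

structure IsConstantCocycle {G : Type*} [Group G] (α : V ≃+ V) (β : V → V → G) :
    Prop where
  map_triangle : ∀ x y z, β (x + α (x + y)) (x + α (x + z)) * β x z = β x (y + α (y + z)) * β y z
  apply_self : ∀ x, β x x = 1

theorem IsConstantCocycle.apply_zero_left {G : Type*} [Group G] {α : V ≃+ V} {β : V → V → G}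
    (hβ : IsConstantCocycle α β) (hα : ∀ x, α (α x) = x + α x)
    (hnorm : ∀ x, β x 0 = 1) (y : V) : β 0 y = 1 := by
  obtain ⟨z, rfl⟩ : ∃ z, α (α z) = y := ⟨α.symm (α.symm y), by simp⟩
  have h := hβ.map_triangle 0 z 0
  simp only [zero_add, add_zero, map_zero, hnorm, mul_one, ← hα] at h
  exact h.symm

variable [Module (ZMod 2) V]

theorem AddEquiv.apply_apply_eq_add_of_fixedPointFree (α : V ≃+ V)
    (h3 : ∀ x, α (α (α x)) = x) (hfix : ∀ x, α x = x → x = 0) (x : V) :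
    α (α x) = x + α x := by
  have horbit : x + α x + α (α x) = 0 := hfix _ (by simp only [map_add, h3]; abel)
  rw [← sub_eq_zero, ← ZModModule.neg_eq_self (x + α x), sub_neg_eq_add, add_comm, horbit]

theorem AddEquiv.apply_apply_apply_eq_self {α : V ≃+ V} (hα : ∀ x, α (α x) = x + α x) (x : V) :
    α (α (α x)) = x := by
  rw [hα, hα, add_left_comm, ZModModule.add_self, add_zero]

namespace IsConstantCocycle

variable {G : Type*} [Group G] {α : V ≃+ V} {β : V → V → G}

theorem mul_apply_apply_eq_one (hβ : IsConstantCocycle α β) (hα : ∀ x, α (α x) = x + α x)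
    (hnorm : ∀ x, β x 0 = 1) (x : V) : β x (α (α x)) * β (α x) x = 1 := by
  have h := hβ.map_triangle x (α x) x
  simp only [← hα, add_comm (α x) x, AddEquiv.apply_apply_apply_eq_self hα,
    ZModModule.add_self, map_zero, add_zero, hβ.apply_self, mul_one,
    hβ.apply_zero_left hα hnorm] at h
  exact h.symm

theorem apply_apply_apply_eq (hβ : IsConstantCocycle α β) (hα : ∀ x, α (α x) = x + α x)
    (hnorm : ∀ x, β x 0 = 1) (x : V) : β (α (α x)) (α x) = β x (α x) := by
  have h := hβ.map_triangle (α x) x (α x)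
  simp only [← hα, add_comm (α x) x, AddEquiv.apply_apply_apply_eq_self hα,
    ZModModule.add_self, map_zero, add_zero, hβ.apply_self, mul_one, hnorm, one_mul] at h
  exact h

theorem values_on_orbit (hβ : IsConstantCocycle α β) (hα : ∀ x, α (α x) = x + α x)
    (hnorm : ∀ x, β x 0 = 1) (x : V) :
    β x (α (α x)) = β x (α x) ∧ β (α x) (α (α x)) = β x (α x) ∧ β x (α x) ^ 2 = 1 := by
  have h3 := AddEquiv.apply_apply_apply_eq_self hα
  have hpq := hβ.mul_apply_apply_eq_one hα hnorm x
  have hqr := hβ.mul_apply_apply_eq_one hα hnorm (α x)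
  have hrp := hβ.mul_apply_apply_eq_one hα hnorm (α (α x))
  rw [h3] at hqr
  rw [h3, h3] at hrp
  obtain ⟨-, hr, hsq⟩ := eq_and_sq_eq_one_of_mul_eq_one_cyclic hpq hqr hrp
  have hβαx := hβ.apply_apply_apply_eq hα hnorm (α x)
  rw [h3] at hβαx
  rw [hβ.apply_apply_apply_eq hα hnorm] at hr
  exact ⟨hr.symm, hβαx.symm.trans hr.symm, hr ▸ hsq⟩

end IsConstantCocycle

end Cocycle

theorem eq_zero_or_eq_or_eq_or_eq_add_of_ne {x z : ZMod 2 × ZMod 2} (hx : x ≠ 0) (hz : z ≠ 0)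
    (hxz : z ≠ x) (y : ZMod 2 × ZMod 2) : y = 0 ∨ y = x ∨ y = z ∨ y = x + z :=
  (by decide : ∀ x z y : ZMod 2 × ZMod 2, x ≠ 0 → z ≠ 0 → z ≠ x →
    y = 0 ∨ y = x ∨ y = z ∨ y = x + z) x z y hx hz hxz

namespace AddAut

theorem apply_apply_apply_eq_self_of_addOrderOf_eq_three {M : Type*} [Add M] {α : AddAut M}
    (hα : addOrderOf α = 3) (x : M) : α (α (α x)) = x := by
  have h : 3 • α = 0 := hα ▸ addOrderOf_nsmul_eq_zero α
  simpa only [succ_nsmul, zero_nsmul, zero_add, add_apply, zero_apply] using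
    DFunLike.congr_fun h x

variable {α : AddAut (ZMod 2 × ZMod 2)}

theorem eq_zero_of_apply_eq_self (hα : addOrderOf α = 3) {u : ZMod 2 × ZMod 2} (hu : α u = u) :
    u = 0 := by
  by_contra hu0
  obtain ⟨y, hy0, hyu⟩ :=
    (by decide : ∀ u : ZMod 2 × ZMod 2, u ≠ 0 → ∃ y, y ≠ 0 ∧ y ≠ u) u hu0
  have hcases := eq_zero_or_eq_or_eq_or_eq_add_of_ne hu0 hy0 hyu
  rcases hcases (α y) with hαy | hαy | hαy | hαy
  · exact hy0 (α.map_eq_zero_iff.mp hαy)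
  · exact hyu (α.injective (hαy.trans hu.symm))
  · have hid : α = 0 := AddEquiv.ext fun x => by
      rcases hcases x with rfl | rfl | rfl | rfl
      exacts [map_zero α, hu, hαy, by rw [map_add, hu, hαy]; rfl]
    simp [hid] at hα
  · -- `α` swaps `y` and `u + y`, which is incompatible with `α³ = 1`
    have hαuy : α (u + y) = y := by
      rw [map_add, hu, hαy, ← add_assoc, ZModModule.add_self, zero_add]
    have h3 := apply_apply_apply_eq_self_of_addOrderOf_eq_three hα y
    rw [hαy, hαuy, hαy, add_eq_right] at h3
    exact hu0 h3


theorem apply_apply_eq_add_of_addOrderOf_eq_three (hα : addOrderOf α = 3)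
    (x : ZMod 2 × ZMod 2) : α (α x) = x + α x :=
  α.apply_apply_eq_add_of_fixedPointFree (apply_apply_apply_eq_self_of_addOrderOf_eq_three hα)
    (fun _ => eq_zero_of_apply_eq_self hα) x

theorem eq_zero_or_eq_or_eq_apply_or_eq_apply_apply (hα : addOrderOf α = 3)
    {x : ZMod 2 × ZMod 2} (hx : x ≠ 0) (y : ZMod 2 × ZMod 2) :
    y = 0 ∨ y = x ∨ y = α x ∨ y = α (α x) := by
  rw [apply_apply_eq_add_of_addOrderOf_eq_three hα]
  exact eq_zero_or_eq_or_eq_or_eq_add_of_ne hx (α.map_ne_zero_iff.mpr hx)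
    (mt (eq_zero_of_apply_eq_self hα) hx) y

end AddAut

theorem IsConstantCocycle.apply_eq_of_ne_zero {G : Type*} [Group G]
    {α : AddAut (ZMod 2 × ZMod 2)} (hα : addOrderOf α = 3)
    {β : ZMod 2 × ZMod 2 → ZMod 2 × ZMod 2 → G}
    (hβ : IsConstantCocycle α β) (hnorm : ∀ x, β x 0 = 1) {u x y : ZMod 2 × ZMod 2}
    (hu : u ≠ 0) (hx : x ≠ 0) (hy : y ≠ 0) (hxy : x ≠ y) : β x y = β u (α u) := by
  have hα' := AddAut.apply_apply_eq_add_of_addOrderOf_eq_three hα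
  have hxαx : β x y = β x (α x) := by
    rcases AddAut.eq_zero_or_eq_or_eq_apply_or_eq_apply_apply hα hx y with rfl | rfl | rfl | rfl
    exacts [(hy rfl).elim, (hxy rfl).elim, rfl, (hβ.values_on_orbit hα' hnorm x).1]
  rw [hxαx]
  rcases AddAut.eq_zero_or_eq_or_eq_apply_or_eq_apply_apply hα hu x with rfl | rfl | rfl | rfl
  · exact (hx rfl).elim
  · rfl
  · exact (hβ.values_on_orbit hα' hnorm u).2.1
  · have h := (hβ.values_on_orbit hα' hnorm (α u)).2.1
    simpa only [AddEquiv.apply_apply_apply_eq_self hα', (hβ.values_on_orbit hα' hnorm u).2.1]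
      using h

/-- For the doubly transitive quandle of order 4, `X = Q(ℤ₂², α)` with
`x ▷ y = x + α(x + y)` and `α` of order 3: every `0`-normalized constant
cocycle `β : X × X → G` equals `β_a` for a unique `a ∈ G` with `a² = 1`,
where `β_a` is `1` on pairs with `x = 0`, `y = 0` or `x = y`, and `a` otherwise. -/
theorem order4_normalized_cocycles {G : Type*} [Group G]
    (α : AddAut (ZMod 2 × ZMod 2)) (hα : addOrderOf α = 3)
    (β : ZMod 2 × ZMod 2 → ZMod 2 × ZMod 2 → G)
    (hcc : ∀ x y z : ZMod 2 × ZMod 2,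
      β (x + α (x + y)) (x + α (x + z)) * β x z =
        β x (y + α (y + z)) * β y z)
    (hcq : ∀ x, β x x = 1)
    (hnorm : ∀ x, β x 0 = 1) :
    ∃! a : G, a ^ 2 = 1 ∧
      ∀ x y : ZMod 2 × ZMod 2,
        β x y = if x = 0 ∨ y = 0 ∨ x = y then 1 else a := by
  have hβ : IsConstantCocycle α β := ⟨hcc, hcq⟩
  have hα' := AddAut.apply_apply_eq_add_of_addOrderOf_eq_three hα
  set u : ZMod 2 × ZMod 2 := (1, 0)
  have hu : u ≠ 0 := by decide
  have hαu : α u ≠ 0 := α.map_ne_zero_iff.mpr hu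
  have huαu : u ≠ α u := fun h => hu (AddAut.eq_zero_of_apply_eq_self hα h.symm)
  refine ⟨β u (α u), ⟨(hβ.values_on_orbit hα' hnorm u).2.2, fun x y => ?_⟩, ?_⟩
  · split_ifs with h
    · rcases h with rfl | rfl | rfl
      exacts [hβ.apply_zero_left hα' hnorm y, hnorm x, hcq x]
    · obtain ⟨hx, hy, hxy⟩ : x ≠ 0 ∧ y ≠ 0 ∧ x ≠ y := by simpa only [not_or] using h
      exact hβ.apply_eq_of_ne_zero hα hnorm hu hx hy hxy
  · rintro a ⟨-, ha⟩
    simpa [hu, hαu, huαu] using (ha u (α u)).symm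
end
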